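/- Let R be an irreducible finite reduced crystallographic root system with base B of cardinality r and Weyl group W. Let λ be a nonzero dominant element of the rational span of R, and let w ∈ W be expressible as a product of fewer than r simple reflections. Then w(λ) is not of the form −Σ_{α∈B} a_α·α with all coefficients a_α ≥ 0. -/

import Mathlib

open scoped RealInnerProductSpace

variable {V : Type*} [NormedAddCommGroup V] [InnerProductSpace ℝ V]

/-- The reflection in the hyperplane orthogonal to `α`:
`x ↦ x - (2⟪α, x⟫/⟪α, α⟫) α`. -/
noncomputable def reflVec (α x : V) : V :=
  x - ((2 * ⟪α, x⟫) / ⟪α, α⟫) • α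

/-- `v` is a linear combination of the elements of `B` with nonnegative
coefficients. -/
def IsNonnegComb (B : Finset V) (v : V) : Prop :=
  ∃ c : V → ℝ, (∀ α, 0 ≤ c α) ∧ v = ∑ α ∈ B, c α • α

/-- A finite reduced crystallographic root system `R` in a Euclidean space `V`,
together with a base (system of simple roots) `B` and the simple reflections
`s α` (realized as linear automorphisms of `V`). -/
structure RootSystemData (V : Type*) [NormedAddCommGroup V]
    [InnerProductSpace ℝ V] where
  /-- the (finite) set of roots -/
  R : Finset V
  /-- the base (system of simple roots) -/
  B : Finset V
  /-- the reflections: `s α` is the reflection in the hyperplane orthogonal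
  to `α` (see `s_apply`) -/
  s : V → (V ≃ₗ[ℝ] V)
  zero_not_mem : (0 : V) ∉ R
  base_subset : B ⊆ R
  base_indep : LinearIndependent ℝ (fun b : {x // x ∈ B} => (b : V))
  /-- reduced: the only multiples of a root `α` that are roots are `±α` -/
  reduced : ∀ α ∈ R, ∀ c : ℝ, c • α ∈ R → c = 1 ∨ c = -1
  /-- crystallographic: `⟨β, α∨⟩ = 2⟪α, β⟫/⟪α, α⟫` is an integer -/
  crystallographic : ∀ α ∈ R, ∀ β ∈ R, ∃ n : ℤ, 2 * ⟪α, β⟫ = (n : ℝ) * ⟪α, α⟫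
  /-- `R` is stable under the reflections in its elements -/
  reflection_mem : ∀ α ∈ R, ∀ β ∈ R, reflVec α β ∈ R
  /-- `s α` is the reflection in the hyperplane orthogonal to `α` -/
  s_apply : ∀ α ∈ R, ∀ x : V, s α x = reflVec α x
  /-- every root is a nonnegative or a nonpositive combination of the base -/
  pos_or_neg : ∀ β ∈ R, IsNonnegComb B β ∨ IsNonnegComb B (-β)

/-- The positive roots: the roots which are nonnegative combinations of the
base. -/
noncomputable def posRoots (P : RootSystemData V) : Finset V :=
  @Finset.filter V (fun v => IsNonnegComb P.B v) (Classical.decPred _) P.R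

/-- The set of simple reflections. -/
def simples (P : RootSystemData V) : Set (V ≃ₗ[ℝ] V) :=
  P.s '' (P.B : Set V)

/-- The Weyl group: the subgroup of `GL(V)` generated by the simple
reflections. -/
def weylGroup (P : RootSystemData V) : Subgroup (V ≃ₗ[ℝ] V) :=
  Subgroup.closure (simples P)

/-- The length of `w` with respect to a generating set `S`: the least number of
factors in an expression of `w` as a product of elements of `S`. -/
noncomputable def lengthIn {G : Type*} [Group G] (S : Set G) (w : G) : ℕ :=
  sInf {n | ∃ l : List G, l.length = n ∧ (∀ x ∈ l, x ∈ S) ∧ l.prod = w}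

/-- The Dynkin diagram on a set `I` of simple roots: vertices are the elements
of `I`, with an edge between two distinct roots exactly when they are not
orthogonal. -/
def dynkinOn (I : Finset V) : SimpleGraph {x // x ∈ I} where
  Adj a b := a ≠ b ∧ ⟪(a : V), (b : V)⟫ ≠ 0
  symm := by
    constructor
    intro a b h
    refine ⟨h.1.symm, ?_⟩
    rw [real_inner_comm]
    exact h.2
  loopless := by
    constructor
    intro a h
    exact h.1 rfl

/-- `ρ`, the half-sum of the positive roots. -/
noncomputable def halfSumPos (P : RootSystemData V) : V :=
  (2⁻¹ : ℝ) • ∑ β ∈ posRoots P, β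


/-!
A nonzero dominant `λ` in the span of the base has nonnegative coordinates, because distinct
simple roots make obtuse angles; along each edge of the (connected) Dynkin diagram a zero
coordinate at `α` next to a positive one would make `⟪λ, α⟫` negative, so all coordinates are
positive.
Each simple reflection `s β` moves a vector by a multiple of `β`, so `w λ - λ` lies in the span of
the fewer than `r` simple roots occurring in a word for `w`. For a simple root `α₀` missing from
the word, the `α₀`-coordinate of `w λ` is that of `λ`, hence positive.
-/

theorem LinearIndepOn.coeff_eq_of_sum_smul_eq {B : Finset V}
    (hB : LinearIndepOn ℝ id (B : Set V)) {f g : V → ℝ}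
    (h : ∑ α ∈ B, f α • α = ∑ α ∈ B, g α • α) {α : V} (hα : α ∈ B) : f α = g α := by
  refine sub_eq_zero.1 (linearIndepOn_finset_iff.1 hB (f - g) ?_ α hα)
  simpa [sub_smul, Finset.sum_sub_distrib] using sub_eq_zero.2 h

theorem IsNonnegComb.mem_span {B : Finset V} {v : V} (h : IsNonnegComb B v) :
    v ∈ Submodule.span ℝ (B : Set V) := by
  obtain ⟨c, -, rfl⟩ := h
  exact Submodule.sum_smul_mem _ _ fun α hα => Submodule.subset_span hα

theorem not_isNonnegComb_sub {B : Finset V} (hB : LinearIndepOn ℝ id (B : Set V))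
    {α β : V} (hα : α ∈ B) (hβ : β ∈ B) (hne : α ≠ β) : ¬ IsNonnegComb B (β - α) := by
  classical
  rintro ⟨c, hc, hsum⟩
  have key : ∑ γ ∈ B, (c γ + if γ = α then 1 else 0) • γ
      = ∑ γ ∈ B, (if γ = β then (1 : ℝ) else 0) • γ := by
    simp [add_smul, Finset.sum_add_distrib, ← hsum, hα, hβ]
  have hcoeff := hB.coeff_eq_of_sum_smul_eq key hα
  simp only [if_true, if_neg hne] at hcoeff
  linarith [hc α]

theorem reflVec_eq_sub {α β : V} (hα : α ≠ 0) (h : 2 * ⟪α, β⟫ = ⟪α, α⟫) :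
    reflVec α β = β - α := by
  rw [reflVec, h, div_self (inner_self_ne_zero.2 hα), one_smul]

namespace RootSystemData

variable (P : RootSystemData V)

theorem linearIndepOn_B : LinearIndepOn ℝ id (P.B : Set V) :=
  P.base_indep

theorem ne_zero_of_mem_R {α : V} (hα : α ∈ P.R) : α ≠ 0 :=
  fun h => P.zero_not_mem (h ▸ hα)

theorem mem_span_B_of_mem_R {γ : V} (hγ : γ ∈ P.R) : γ ∈ Submodule.span ℝ (P.B : Set V) := by
  rcases P.pos_or_neg γ hγ with h | h
  · exact h.mem_span
  · simpa using Submodule.neg_mem _ h.mem_span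

variable {P}

theorem sub_notMem_R {α β : V} (hα : α ∈ P.B) (hβ : β ∈ P.B) (hne : α ≠ β) :
    β - α ∉ P.R := by
  intro h
  rcases P.pos_or_neg _ h with h | h
  · exact not_isNonnegComb_sub P.linearIndepOn_B hα hβ hne h
  · rw [neg_sub] at h
    exact not_isNonnegComb_sub P.linearIndepOn_B hβ hα hne.symm h

theorem inner_self_le_inner_of_pos {α β : V} (hα : α ∈ P.B) (hβ : β ∈ P.B) (hne : α ≠ β)
    (hpos : 0 < ⟪α, β⟫) : ⟪α, α⟫ ≤ ⟪α, β⟫ := by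
  have hαR := P.base_subset hα
  have hαα : 0 < ⟪α, α⟫ := real_inner_self_pos.2 (P.ne_zero_of_mem_R hαR)
  obtain ⟨n, hn⟩ := P.crystallographic α hαR β (P.base_subset hβ)
  have hn1 : n ≠ 1 := by
    rintro rfl
    rw [Int.cast_one, one_mul] at hn
    exact P.sub_notMem_R hα hβ hne
      (reflVec_eq_sub (P.ne_zero_of_mem_R hαR) hn ▸ P.reflection_mem α hαR β (P.base_subset hβ))
  rcases (by omega : n ≤ 0 ∨ 2 ≤ n) with hn0 | hn2
  · have : (n : ℝ) ≤ 0 := by exact_mod_cast hn0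
    nlinarith
  · have : (2 : ℝ) ≤ n := by exact_mod_cast hn2
    nlinarith

theorem inner_le_zero {α β : V} (hα : α ∈ P.B) (hβ : β ∈ P.B) (hne : α ≠ β) :
    ⟪α, β⟫ ≤ 0 := by
  by_contra! hpos
  have h₁ := P.inner_self_le_inner_of_pos hα hβ hne hpos
  have h₂ := P.inner_self_le_inner_of_pos hβ hα hne.symm (by rwa [real_inner_comm])
  refine hne (sub_eq_zero.1 (real_inner_self_nonpos.1 ?_))
  rw [inner_sub_sub_self]
  linarith [real_inner_comm α β]

end RootSystemData

section ObtuseFamily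

variable {B : Finset V}

theorem inner_sum_smul_sum_smul_nonpos (hobtuse : ∀ α ∈ B, ∀ β ∈ B, α ≠ β → ⟪α, β⟫ ≤ 0)
    {p q : V → ℝ} (hp : ∀ α ∈ B, 0 ≤ p α) (hq : ∀ α ∈ B, 0 ≤ q α)
    (hpq : ∀ α, p α = 0 ∨ q α = 0) :
    ⟪∑ α ∈ B, p α • α, ∑ β ∈ B, q β • β⟫ ≤ 0 := by
  simp only [sum_inner, inner_sum, real_inner_smul_left, real_inner_smul_right]
  refine Finset.sum_nonpos fun β hβ => Finset.sum_nonpos fun α hα => ?_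
  rcases eq_or_ne α β with rfl | hne
  · rcases hpq α with h | h <;> simp [h]
  · exact mul_nonpos_of_nonneg_of_nonpos (hq β hβ)
      (mul_nonpos_of_nonneg_of_nonpos (hp α hα) (hobtuse α hα β hβ hne))

/-- Writing `λ = λ⁺ - λ⁻` by the signs of its coefficients, dominance gives `⟪λ, λ⁻⟫ ≥ 0`
while obtuseness gives `⟪λ⁺, λ⁻⟫ ≤ 0`, so `‖λ⁻‖² ≤ 0`. -/
theorem coeff_nonneg_of_inner_nonneg (hB : LinearIndepOn ℝ id (B : Set V))
    (hobtuse : ∀ α ∈ B, ∀ β ∈ B, α ≠ β → ⟪α, β⟫ ≤ 0) {f : V → ℝ}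
    (hdom : ∀ α ∈ B, 0 ≤ ⟪∑ β ∈ B, f β • β, α⟫) : ∀ α ∈ B, 0 ≤ f α := by
  set lam := ∑ β ∈ B, f β • β
  set μ := ∑ α ∈ B, (f α)⁻ • α
  have hsplit : lam = ∑ α ∈ B, (f α)⁺ • α - μ := by
    simp only [lam, μ, ← Finset.sum_sub_distrib, ← sub_smul, posPart_sub_negPart]
  have h₁ : 0 ≤ ⟪lam, μ⟫ := by
    rw [inner_sum]
    exact Finset.sum_nonneg fun α hα => by
      rw [real_inner_smul_right]; exact mul_nonneg (negPart_nonneg _) (hdom α hα)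
  have h₂ : ⟪∑ α ∈ B, (f α)⁺ • α, μ⟫ ≤ 0 :=
    inner_sum_smul_sum_smul_nonpos hobtuse (fun _ _ => posPart_nonneg _)
      (fun _ _ => negPart_nonneg _)
      fun α => (le_total (f α) 0).imp posPart_eq_zero.2 negPart_eq_zero.2
  have hμ : μ = 0 := by
    rw [hsplit, inner_sub_left] at h₁
    exact real_inner_self_nonpos.1 (by linarith)
  intro α hα
  exact negPart_eq_zero.1 (linearIndepOn_finset_iff.1 hB _ (by simpa using hμ) α hα)

theorem coeff_pos_of_adj (hobtuse : ∀ α ∈ B, ∀ β ∈ B, α ≠ β → ⟪α, β⟫ ≤ 0) {f : V → ℝ}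
    (hf : ∀ α ∈ B, 0 ≤ f α) (hdom : ∀ α ∈ B, 0 ≤ ⟪∑ β ∈ B, f β • β, α⟫)
    {a b : B} (hab : (dynkinOn B).Adj a b) (ha : 0 < f a) : 0 < f b := by
  by_contra! hb
  have hb0 : f b = 0 := le_antisymm hb (hf b b.2)
  have hne : (a : V) ≠ b := fun h => hab.1 (Subtype.ext h)
  refine (hdom b b.2).not_gt ?_
  rw [sum_inner]
  refine Finset.sum_neg' (fun γ hγ => ?_) ⟨a, a.2, ?_⟩
  · rw [real_inner_smul_left]
    rcases eq_or_ne γ b with rfl | hγb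
    · simp [hb0]
    · exact mul_nonpos_of_nonneg_of_nonpos (hf γ hγ) (hobtuse γ hγ b b.2 hγb)
  · rw [real_inner_smul_left]
    exact mul_neg_of_pos_of_neg ha ((hobtuse a a.2 b b.2 hne).lt_of_ne hab.2)

theorem coeff_pos_of_connected (hobtuse : ∀ α ∈ B, ∀ β ∈ B, α ≠ β → ⟪α, β⟫ ≤ 0)
    (hconn : (dynkinOn B).Connected) {f : V → ℝ} (hf : ∀ α ∈ B, 0 ≤ f α)
    (hdom : ∀ α ∈ B, 0 ≤ ⟪∑ β ∈ B, f β • β, α⟫) (hne : ∑ β ∈ B, f β • β ≠ 0) :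
    ∀ α ∈ B, 0 < f α := by
  obtain ⟨α₀, hα₀, hpos⟩ : ∃ α₀ ∈ B, 0 < f α₀ := by
    by_contra! h
    exact hne (Finset.sum_eq_zero fun α hα => by rw [le_antisymm (h α hα) (hf α hα), zero_smul])
  suffices ∀ b : B, 0 < f b from fun α hα => this ⟨α, hα⟩
  intro b
  induction (SimpleGraph.reachable_iff_reflTransGen _ _).1 (hconn.preconnected ⟨α₀, hα₀⟩ b) with
  | refl => exact hpos
  | tail _ hab ih => exact coeff_pos_of_adj hobtuse hf hdom hab ih

end ObtuseFamily

namespace RootSystemData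

variable {P : RootSystemData V}

theorem exists_pos_coeffs_of_dominant (hirr : (dynkinOn P.B).Connected) {lam : V}
    (hne : lam ≠ 0) (hspan : lam ∈ Submodule.span ℝ (P.B : Set V))
    (hdom : ∀ α ∈ P.B, 0 ≤ ⟪lam, α⟫) :
    ∃ f : V → ℝ, (∀ α ∈ P.B, 0 < f α) ∧ lam = ∑ α ∈ P.B, f α • α := by
  obtain ⟨f, -, rfl⟩ := Submodule.mem_span_finset.1 hspan
  have hobtuse : ∀ α ∈ P.B, ∀ β ∈ P.B, α ≠ β → ⟪α, β⟫ ≤ 0 :=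
    fun α hα β hβ => P.inner_le_zero hα hβ
  refine ⟨f, coeff_pos_of_connected hobtuse hirr ?_ hdom hne, rfl⟩
  exact coeff_nonneg_of_inner_nonneg P.linearIndepOn_B hobtuse hdom

variable (P)

theorem prod_map_s_apply_sub_mem_span {l : List V} (hl : ∀ β ∈ l, β ∈ P.R) (x : V) :
    (l.map P.s).prod x - x ∈ Submodule.span ℝ {β | β ∈ l} := by
  induction l with
  | nil => simp
  | cons β t ih =>
    have hβ := hl β List.mem_cons_self
    set y := (t.map P.s).prod x
    have hy : ((β :: t).map P.s).prod x - x = (y - x) - (2 * ⟪β, y⟫ / ⟪β, β⟫) • β := by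
      rw [List.map_cons, List.prod_cons, LinearEquiv.mul_apply, P.s_apply β hβ, reflVec]
      abel
    rw [hy]
    refine sub_mem ?_ (Submodule.smul_mem _ _ (Submodule.subset_span List.mem_cons_self))
    exact Submodule.span_mono (fun γ hγ => List.mem_cons_of_mem β hγ)
      (ih fun γ hγ => hl γ (List.mem_cons_of_mem β hγ))

theorem exists_sum_smul_eq_prod_map_s_apply_sub {l : List V} (hl : ∀ β ∈ l, β ∈ P.B)
    {α₀ : V} (hα₀ : α₀ ∉ l) (x : V) :
    ∃ g : V → ℝ, g α₀ = 0 ∧ (l.map P.s).prod x - x = ∑ α ∈ P.B, g α • α := by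
  classical
  have hmem : (l.map P.s).prod x - x ∈ Submodule.span ℝ ((P.B.erase α₀ : Finset V) : Set V) :=
    Submodule.span_mono (fun β hβ => Finset.mem_erase.2 ⟨by rintro rfl; exact hα₀ hβ, hl β hβ⟩)
      (P.prod_map_s_apply_sub_mem_span (fun β hβ => P.base_subset (hl β hβ)) x)
  obtain ⟨g, hgsupp, hg⟩ := Submodule.mem_span_finset.1 hmem
  have hg₀ : g α₀ = 0 := Function.notMem_support.1 fun h => by simpa using hgsupp h
  exact ⟨g, hg₀, by rw [← hg, Finset.sum_erase _ (by simp [hg₀])]⟩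

end RootSystemData

/-- Let `R` be an irreducible finite reduced crystallographic root
system with base `B` of cardinality `r` and Weyl group `W`. Let `λ` be a
nonzero dominant element of the rational span of `R` and let `w ∈ W` be a
product of fewer than `r` simple reflections. Then `w(λ)` is not of the form
`-Σ_{α∈B} a_α α` with all `a_α ≥ 0`. -/
theorem image_dominant_not_antidominant {V : Type*} [NormedAddCommGroup V]
    [InnerProductSpace ℝ V] (P : RootSystemData V)
    (hirr : (dynkinOn P.B).Connected)
    (lam : V) (hne : lam ≠ 0)
    (hratspan : ∃ c : V → ℚ, lam = ∑ α ∈ P.R, (c α : ℝ) • α)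
    (hdom : ∀ α ∈ P.B, 0 ≤ 2 * ⟪lam, α⟫ / ⟪α, α⟫)
    (w : V ≃ₗ[ℝ] V)
    (hw : ∃ l : List V, (∀ β ∈ l, β ∈ P.B) ∧ l.length < P.B.card ∧
      w = (l.map P.s).prod) :
    ¬ ∃ a : V → ℝ, (∀ α ∈ P.B, 0 ≤ a α) ∧
        w lam = -∑ α ∈ P.B, a α • α := by
  classical
  rintro ⟨a, ha, hwlam⟩
  obtain ⟨l, hlB, hlen, rfl⟩ := hw
  have hspan : lam ∈ Submodule.span ℝ (P.B : Set V) := by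
    obtain ⟨c, rfl⟩ := hratspan
    exact Submodule.sum_smul_mem _ _ fun γ hγ => P.mem_span_B_of_mem_R hγ
  have hdom_inner : ∀ α ∈ P.B, 0 ≤ ⟪lam, α⟫ := fun α hα => by
    have hαα := real_inner_self_pos.2 (P.ne_zero_of_mem_R (P.base_subset hα))
    linarith [(le_div_iff₀ hαα).1 (hdom α hα)]
  obtain ⟨f, hf, rfl⟩ := P.exists_pos_coeffs_of_dominant hirr hne hspan hdom_inner
  obtain ⟨α₀, hα₀, hα₀l⟩ : ∃ α₀ ∈ P.B, α₀ ∉ l := by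
    simpa using Finset.exists_mem_notMem_of_card_lt_card (l.toFinset_card_le.trans_lt hlen)
  obtain ⟨g, hg₀, hg⟩ := P.exists_sum_smul_eq_prod_map_s_apply_sub hlB hα₀l (∑ α ∈ P.B, f α • α)
  rw [hwlam, ← Finset.sum_neg_distrib, ← Finset.sum_sub_distrib] at hg
  simp only [← neg_smul, ← sub_smul] at hg
  have hcoeff := P.linearIndepOn_B.coeff_eq_of_sum_smul_eq hg hα₀
  linarith [hf α₀ hα₀, ha α₀ hα₀]
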